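/- arXiv:2404.19623 — 2 statements merged into one kernel-verified Lean document; each statement's English description precedes it below -/
import Mathlib

section
/- (Theorem 1, part 2, genericity made precise) Suppose that for every player i and every k ≥ 1 the survivor set Σᵏ_{θ_{ik}} contains exactly one element (a unique surviving action for the level-k type at step k). Then Ψᵏ_{θ_{ik}} = Σᵏ_{θ_{ik}} for every player i and every k ∈ ℕ₀, and consequently Ψ^∞_{θ_i} = Σ^∞_{θ_i} for every type θ_i: the CH solution coincides with Δ^κ-rationalizability. -/
open scoped BigOperators
open Classical

noncomputable section

/-- A belief of a player: a probability distribution over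
(opponent level-type, opponent action) pairs. -/
structure Belief (B : Type*) where
  p : ℕ × B → ℝ
  nonneg : ∀ x, 0 ≤ p x
  hasSum_one : HasSum p 1

/-- Marginal probability assigned to the opponent's level-`t` type. -/
def Belief.marg {B : Type*} [Fintype B] (μ : Belief B) (t : ℕ) : ℝ := ∑ b : B, μ.p (t, b)

/-- Probability assigned by a belief to a set of (level, action) pairs. -/
def Belief.probOn {B : Type*} (μ : Belief B) (S : Set (ℕ × B)) : ℝ := ∑' x, S.indicator μ.p x

/-- `f` normalized to the levels `0, …, k-1` (denoted `f^k` in the paper). -/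
def fnorm (f : ℕ → ℝ) (k t : ℕ) : ℝ := f t / ∑ ℓ ∈ Finset.range k, f ℓ

/-- Membership in `Δ^{θ_{ik}}`: conditions K1–K3 for `k ≥ 1`; no restriction for `k = 0`. -/
def memDelta {B : Type*} [Fintype B] (f : ℕ → ℝ) (k : ℕ) (μ : Belief B) : Prop :=
  k ≠ 0 →
    ((∀ t, k ≤ t → μ.marg t = 0) ∧
     (0 < μ.marg 0 → ∀ b : B, μ.p (0, b) / μ.marg 0 = 1 / (Fintype.card B : ℝ)) ∧
     (∀ t, t < k → μ.marg t = fnorm f k t))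

/-- Expected payoff of own action `a` for the own level-`k` type given belief `μ`:
the level-0 type's payoff is constant `0`, all other types get `v`. -/
def expPay {A B : Type*} (v : A → B → ℝ) (k : ℕ) (μ : Belief B) (a : A) : ℝ :=
  ∑' x : ℕ × B, μ.p x * (if k = 0 then 0 else v a x.2)

/-- `a` is a best response to belief `μ` under the own level-`k` type. -/
def isBR {A B : Type*} (v : A → B → ℝ) (k : ℕ) (μ : Belief B) (a : A) : Prop :=
  ∀ a' : A, expPay v k μ a' ≤ expPay v k μ a

/-- The Δ^κ-rationalization procedure; component 1 is player 1's set of surviving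
(level, action) pairs, component 2 is player 2's. -/
def SigmaProc {A B : Type*} [Fintype A] [Fintype B]
    (v1 : A → B → ℝ) (v2 : B → A → ℝ) (f : ℕ → ℝ) :
    ℕ → Set (ℕ × A) × Set (ℕ × B)
  | 0 => (Set.univ, Set.univ)
  | n + 1 =>
      let P := SigmaProc v1 v2 f n
      ({x | x ∈ P.1 ∧ ∃ μ : Belief B, memDelta f x.1 μ ∧ μ.probOn P.2 = 1 ∧ isBR v1 x.1 μ x.2},
       {y | y ∈ P.2 ∧ ∃ μ : Belief A, memDelta f y.1 μ ∧ μ.probOn P.1 = 1 ∧ isBR v2 y.1 μ y.2})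

/-- The section `Σⁿ_{θ_{1k}}` of player 1 (as a set of actions). -/
def SigmaSec1 {A B : Type*} [Fintype A] [Fintype B]
    (v1 : A → B → ℝ) (v2 : B → A → ℝ) (f : ℕ → ℝ) (n k : ℕ) : Set A :=
  {a | (k, a) ∈ (SigmaProc v1 v2 f n).1}

/-- The section `Σⁿ_{θ_{2k}}` of player 2 (as a set of actions). -/
def SigmaSec2 {A B : Type*} [Fintype A] [Fintype B]
    (v1 : A → B → ℝ) (v2 : B → A → ℝ) (f : ℕ → ℝ) (n k : ℕ) : Set B :=
  {b | (k, b) ∈ (SigmaProc v1 v2 f n).2}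

/-- The CH-procedure requirement on beliefs at step `n+1`, given the previous
sections `Ψⁿ` of the opponent: the support of `μ` equals `∪_{t=0}^{n} Ψⁿ_{θ_{-i,t}}`
and `μ` is conditionally uniform over each `Ψⁿ_{θ_{-i,t}}`. -/
def CHBelief {B : Type*} (Ψ : ℕ → Set B) (n : ℕ) (μ : Belief B) : Prop :=
  (∀ x : ℕ × B, μ.p x ≠ 0 ↔ x.1 ≤ n ∧ x.2 ∈ Ψ x.1) ∧
  (∀ t, t ≤ n → ∀ b b' : B, b ∈ Ψ t → b' ∈ Ψ t → μ.p (t, b) = μ.p (t, b'))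

/-- The CH-procedure: step `n` returns, for each player and each level `k`,
the set of actions in `Ψⁿ_{θ_{ik}}`. -/
def CHProc {A B : Type*} [Fintype A] [Fintype B]
    (v1 : A → B → ℝ) (v2 : B → A → ℝ) (f : ℕ → ℝ) :
    ℕ → (ℕ → Set A) × (ℕ → Set B)
  | 0 => (fun _ => Set.univ, fun _ => Set.univ)
  | n + 1 =>
      let P := CHProc v1 v2 f n
      (fun k =>
        if k = n + 1 then
          {a | ∃ μ : Belief B, memDelta f (n + 1) μ ∧ CHBelief P.2 n μ ∧ isBR v1 (n + 1) μ a}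
        else P.1 k,
       fun k =>
        if k = n + 1 then
          {b | ∃ μ : Belief A, memDelta f (n + 1) μ ∧ CHBelief P.1 n μ ∧ isBR v2 (n + 1) μ b}
        else P.2 k)

/-- `Ψⁿ_{θ_{1k}}` for player 1 (as a set of actions). -/
def CHSec1 {A B : Type*} [Fintype A] [Fintype B]
    (v1 : A → B → ℝ) (v2 : B → A → ℝ) (f : ℕ → ℝ) (n k : ℕ) : Set A :=
  (CHProc v1 v2 f n).1 k

/-- `Ψⁿ_{θ_{2k}}` for player 2 (as a set of actions). -/
def CHSec2 {A B : Type*} [Fintype A] [Fintype B]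
    (v1 : A → B → ℝ) (v2 : B → A → ℝ) (f : ℕ → ℝ) (n k : ℕ) : Set B :=
  (CHProc v1 v2 f n).2 k

end

/-!
A belief of the level-`k` type only charges opponent levels `t < k`, and by induction the
level-`t` part of the survivor sets `Σⁿ` no longer changes once `n ≥ t`; hence the level-`k`
part of `Σⁿ` is already fixed at `n = k`, and beliefs concentrated on `Σᵏ⁻¹` are concentrated
on every `Σⁿ`.


A `Δ^{θ_k}`-belief concentrated on `Σᵏ⁻¹` is then exactly a CH-belief over the sections
`Σᵗ_{θ_t}`, `t < k`: its level-`t` marginal `f^k(t)` is positive, so it charges every surviving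
action; at level `0` it is uniform by K2, and at levels `t ≥ 1` genericity leaves a single
surviving action. Conversely a CH-belief over these sections is concentrated on `Σᵏ⁻¹`.
Induction on `k` then identifies `Ψᵏ_{θ_k}` with `Σᵏ_{θ_k}`.
-/

namespace Belief

variable {B : Type*}

lemma probOn_eq_one_iff (μ : Belief B) (S : Set (ℕ × B)) :
    μ.probOn S = 1 ↔ ∀ x ∉ S, μ.p x = 0 := by
  have hsum := μ.hasSum_one.summable
  constructor
  · intro h x hx
    by_contra hp
    have hlt : μ.probOn S < ∑' y, μ.p y :=
      (hsum.indicator S).tsum_lt_tsum (i := x)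
        (Set.indicator_le_self' fun z _ => μ.nonneg z)
        (by rw [Set.indicator_of_notMem hx]; exact (μ.nonneg x).lt_of_ne (Ne.symm hp)) hsum
    rw [h, μ.hasSum_one.tsum_eq] at hlt
    exact lt_irrefl _ hlt
  · intro h
    have hind : S.indicator μ.p = μ.p := Set.indicator_eq_self.2 fun x hx => by
      by_contra hxS
      exact hx (h x hxS)
    rw [probOn, hind, μ.hasSum_one.tsum_eq]

lemma probOn_eq_one_of_subset {μ : Belief B} {S T : Set (ℕ × B)} (hS : μ.probOn S = 1)
    (hST : S ⊆ T) : μ.probOn T = 1 := by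
  rw [probOn_eq_one_iff] at hS ⊢
  exact fun x hx => hS x fun h => hx (hST h)

lemma p_eq_zero_of_marg_eq_zero [Fintype B] (μ : Belief B) {t : ℕ} (h : μ.marg t = 0) (b : B) :
    μ.p (t, b) = 0 :=
  (Finset.sum_eq_zero_iff_of_nonneg fun b _ => μ.nonneg (t, b)).1 h b (Finset.mem_univ b)

lemma marg_eq_p_of_forall_ne [Fintype B] (μ : Belief B) {t : ℕ} {b₀ : B}
    (h : ∀ b, b ≠ b₀ → μ.p (t, b) = 0) : μ.marg t = μ.p (t, b₀) :=
  Finset.sum_eq_single b₀ (fun b _ hb => h b hb) fun hb => absurd (Finset.mem_univ b₀) hb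

noncomputable def dirac (x₀ : ℕ × B) : Belief B where
  p x := if x = x₀ then 1 else 0
  nonneg x := by split <;> norm_num
  hasSum_one := hasSum_ite_eq x₀ 1

lemma probOn_dirac {x₀ : ℕ × B} {S : Set (ℕ × B)} (h : x₀ ∈ S) :
    (dirac x₀).probOn S = 1 := by
  rw [probOn_eq_one_iff]
  intro x hx
  have hne : x ≠ x₀ := fun he => hx (he ▸ h)
  simp [dirac, hne]

end Belief

section Beliefs

variable {A B : Type*} {f : ℕ → ℝ} {k : ℕ} {μ : Belief B}

lemma memDelta_zero [Fintype B] (f : ℕ → ℝ) (μ : Belief B) : memDelta f 0 μ :=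
  fun h => (h rfl).elim

lemma isBR_zero (v : A → B → ℝ) (μ : Belief B) (a : A) : isBR v 0 μ a := by
  simp [isBR, expPay]

lemma memDelta.p_eq_zero_of_le [Fintype B] (hμ : memDelta f k μ) (hk : k ≠ 0) {t : ℕ}
    (hkt : k ≤ t) (b : B) : μ.p (t, b) = 0 :=
  μ.p_eq_zero_of_marg_eq_zero ((hμ hk).1 t hkt) b

lemma memDelta.marg_pos [Fintype B] (hf : ∀ n, 0 < f n) (hμ : memDelta f k μ) {t : ℕ}
    (ht : t < k) : 0 < μ.marg t := by
  rw [(hμ (by omega)).2.2 t ht]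
  exact div_pos (hf t) (Finset.sum_pos (fun i _ => hf i) (Finset.nonempty_range_iff.2 (by omega)))

lemma memDelta.p_zero_eq [Fintype B] [Nonempty B] (hf : ∀ n, 0 < f n) (hμ : memDelta f k μ)
    (hk : k ≠ 0) (b : B) : μ.p (0, b) = μ.marg 0 / Fintype.card B := by
  have hmarg := hμ.marg_pos hf (Nat.pos_of_ne_zero hk)
  have hcard : (0 : ℝ) < Fintype.card B := by exact_mod_cast Fintype.card_pos
  have h := (hμ hk).2.1 hmarg b
  field_simp at h ⊢
  linarith

lemma CHBelief.congr {Ψ Ψ' : ℕ → Set B} {n : ℕ} (hμ : CHBelief Ψ n μ)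
    (h : ∀ t ≤ n, Ψ t = Ψ' t) : CHBelief Ψ' n μ := by
  refine ⟨fun x => ?_, fun t ht b b' hb hb' => hμ.2 t ht b b' ?_ ?_⟩
  · rw [hμ.1 x]
    exact and_congr_right fun hx => by rw [h _ hx]
  · rwa [h t ht]
  · rwa [h t ht]

end Beliefs

lemma iInter_eq_of_forall_subset {α ι : Type*} {s : ι → Set α} {k : ι}
    (h : ∀ n, s k ⊆ s n) : ⋂ n, s n = s k :=
  (Set.iInter_subset s k).antisymm (Set.subset_iInter h)

section SigmaProc

variable {A B : Type*} [Fintype A] [Fintype B] (v1 : A → B → ℝ) (v2 : B → A → ℝ)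
  (f : ℕ → ℝ)

lemma SigmaProc_swap (n : ℕ) :
    SigmaProc v2 v1 f n = ((SigmaProc v1 v2 f n).2, (SigmaProc v1 v2 f n).1) := by
  induction n with
  | zero => rfl
  | succ n ih => simp only [SigmaProc, ih]

lemma SigmaSec1_swap : SigmaSec1 v2 v1 f = SigmaSec2 v1 v2 f := by
  ext n k
  simp only [SigmaSec1, SigmaSec2, SigmaProc_swap v1 v2]

lemma SigmaSec2_swap : SigmaSec2 v2 v1 f = SigmaSec1 v1 v2 f := by
  ext n k
  simp only [SigmaSec1, SigmaSec2, SigmaProc_swap v1 v2]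

lemma SigmaProc_antitone : Antitone (SigmaProc v1 v2 f) :=
  antitone_nat_of_succ_le fun _ => ⟨fun _ hx => hx.1, fun _ hx => hx.1⟩

variable {v1 v2 f}

lemma mem_SigmaProc_succ_of_isBR {k n : ℕ} {a : A} {μ : Belief B} (hμ : memDelta f k μ)
    (hbr : isBR v1 k μ a) (hsupp : μ.probOn (SigmaProc v1 v2 f n).2 = 1) :
    (k, a) ∈ (SigmaProc v1 v2 f (n + 1)).1 := by
  induction n with
  | zero => exact ⟨trivial, μ, hμ, hsupp, hbr⟩
  | succ n ih =>
    have hsupp' := Belief.probOn_eq_one_of_subset hsupp (SigmaProc_antitone v1 v2 f n.le_succ).2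
    exact ⟨ih hsupp', μ, hμ, hsupp, hbr⟩

lemma mem_SigmaProc_of_mem_self {t : ℕ} {b : B}
    (hstable : ∀ n, t ≤ n → SigmaSec2 v1 v2 f n t = SigmaSec2 v1 v2 f t t)
    (hb : b ∈ SigmaSec2 v1 v2 f t t) (n : ℕ) : (t, b) ∈ (SigmaProc v1 v2 f n).2 := by
  rcases le_total n t with h | h
  · exact (SigmaProc_antitone v1 v2 f h).2 hb
  · rw [← hstable n h] at hb
    exact hb

lemma le_and_mem_SigmaSec2_of_p_ne_zero {m t : ℕ} {b : B} {μ : Belief B}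
    (hstable : ∀ t ≤ m, SigmaSec2 v1 v2 f m t = SigmaSec2 v1 v2 f t t)
    (hμ : memDelta f (m + 1) μ) (hsupp : μ.probOn (SigmaProc v1 v2 f m).2 = 1)
    (hp : μ.p (t, b) ≠ 0) : t ≤ m ∧ b ∈ SigmaSec2 v1 v2 f t t := by
  have ht : t ≤ m := by
    by_contra! ht
    exact hp (hμ.p_eq_zero_of_le m.succ_ne_zero ht b)
  refine ⟨ht, ?_⟩
  rw [← hstable t ht]
  by_contra hb
  exact hp ((μ.probOn_eq_one_iff _).1 hsupp (t, b) hb)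

lemma SigmaSec1_succ_stable {m : ℕ}
    (hstable : ∀ t ≤ m, ∀ n, t ≤ n → SigmaSec2 v1 v2 f n t = SigmaSec2 v1 v2 f t t)
    {n : ℕ} (hn : m + 1 ≤ n) :
    SigmaSec1 v1 v2 f n (m + 1) = SigmaSec1 v1 v2 f (m + 1) (m + 1) := by
  refine Set.Subset.antisymm (fun a ha => (SigmaProc_antitone v1 v2 f hn).1 ha) ?_
  rintro a ⟨-, μ, hμ, hsupp, hbr⟩
  obtain ⟨n, rfl⟩ := Nat.exists_eq_add_of_le' (m.succ_pos.trans_le hn)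
  refine mem_SigmaProc_succ_of_isBR hμ hbr ((μ.probOn_eq_one_iff _).2 fun ⟨t, b⟩ hx => ?_)
  by_contra hp
  obtain ⟨ht, hb⟩ :=
    le_and_mem_SigmaSec2_of_p_ne_zero (fun t ht => hstable t ht m ht) hμ hsupp hp
  exact hx (mem_SigmaProc_of_mem_self (hstable t ht) hb n)

lemma SigmaSec1_succ_zero_eq_univ [Nonempty B] {n : ℕ}
    (h : SigmaSec2 v1 v2 f n 0 = Set.univ) : SigmaSec1 v1 v2 f (n + 1) 0 = Set.univ :=
  Set.eq_univ_of_forall fun _ =>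
    mem_SigmaProc_succ_of_isBR (memDelta_zero f _) (isBR_zero v1 _ _)
      (Belief.probOn_dirac (h ▸ Set.mem_univ (Classical.arbitrary B)))

variable (v1 v2 f)

lemma SigmaSec_zero_eq_univ [Nonempty A] [Nonempty B] (n : ℕ) :
    SigmaSec1 v1 v2 f n 0 = Set.univ ∧ SigmaSec2 v1 v2 f n 0 = Set.univ := by
  induction n with
  | zero => exact ⟨rfl, rfl⟩
  | succ n ih =>
    refine ⟨SigmaSec1_succ_zero_eq_univ ih.2, ?_⟩
    rw [← SigmaSec1_swap]
    exact SigmaSec1_succ_zero_eq_univ (by rw [SigmaSec2_swap]; exact ih.1)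

lemma SigmaSec_stable [Nonempty A] [Nonempty B] (k : ℕ) :
    ∀ n, k ≤ n → SigmaSec1 v1 v2 f n k = SigmaSec1 v1 v2 f k k ∧
      SigmaSec2 v1 v2 f n k = SigmaSec2 v1 v2 f k k := by
  induction k using Nat.strong_induction_on with
  | _ k ih =>
    intro n hn
    rcases k with _ | m
    · simp only [SigmaSec_zero_eq_univ, and_self]
    refine ⟨SigmaSec1_succ_stable (fun t ht n' hn' => (ih t (by omega) n' hn').2) hn, ?_⟩
    rw [← SigmaSec1_swap]
    refine SigmaSec1_succ_stable (fun t ht n' hn' => ?_) hn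
    rw [SigmaSec2_swap]
    exact (ih t (by omega) n' hn').1

lemma iInter_SigmaSec [Nonempty A] [Nonempty B] (k : ℕ) :
    ⋂ n, SigmaSec1 v1 v2 f n k = SigmaSec1 v1 v2 f k k ∧
      ⋂ n, SigmaSec2 v1 v2 f n k = SigmaSec2 v1 v2 f k k := by
  constructor <;> refine iInter_eq_of_forall_subset fun n => ?_ <;> rcases le_total k n with h | h
  · exact (SigmaSec_stable v1 v2 f k n h).1.superset
  · exact fun _ ha => (SigmaProc_antitone v1 v2 f h).1 ha
  · exact (SigmaSec_stable v1 v2 f k n h).2.superset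
  · exact fun _ hb => (SigmaProc_antitone v1 v2 f h).2 hb

end SigmaProc

section CHProc

variable {A B : Type*} [Fintype A] [Fintype B] (v1 : A → B → ℝ) (v2 : B → A → ℝ)
  (f : ℕ → ℝ)

lemma CHProc_swap (n : ℕ) :
    CHProc v2 v1 f n = ((CHProc v1 v2 f n).2, (CHProc v1 v2 f n).1) := by
  induction n with
  | zero => rfl
  | succ n ih => simp only [CHProc, ih]

lemma CHSec1_swap : CHSec1 v2 v1 f = CHSec2 v1 v2 f := by
  ext n k
  simp only [CHSec1, CHSec2, CHProc_swap v1 v2]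

lemma CHSec2_swap : CHSec2 v2 v1 f = CHSec1 v1 v2 f := by
  ext n k
  simp only [CHSec1, CHSec2, CHProc_swap v1 v2]

lemma CHSec1_succ_self (n : ℕ) :
    CHSec1 v1 v2 f (n + 1) (n + 1) = {a | ∃ μ : Belief B, memDelta f (n + 1) μ ∧
      CHBelief (CHSec2 v1 v2 f n) n μ ∧ isBR v1 (n + 1) μ a} := by
  simp only [CHSec1, CHProc, ↓reduceIte]
  rfl


lemma CHSec_succ_of_ne {n k : ℕ} (h : k ≠ n + 1) :
    CHSec1 v1 v2 f (n + 1) k = CHSec1 v1 v2 f n k ∧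
      CHSec2 v1 v2 f (n + 1) k = CHSec2 v1 v2 f n k := by
  simp [CHSec1, CHSec2, CHProc, h]

lemma CHSec_of_le {n k : ℕ} (h : k ≤ n) :
    CHSec1 v1 v2 f n k = CHSec1 v1 v2 f k k ∧ CHSec2 v1 v2 f n k = CHSec2 v1 v2 f k k := by
  induction n, h using Nat.le_induction with
  | base => exact ⟨rfl, rfl⟩
  | succ n hkn ih =>
    rw [(CHSec_succ_of_ne v1 v2 f (by omega)).1, (CHSec_succ_of_ne v1 v2 f (by omega)).2]
    exact ih

lemma CHSec_of_lt {n k : ℕ} (h : n < k) :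
    CHSec1 v1 v2 f n k = Set.univ ∧ CHSec2 v1 v2 f n k = Set.univ := by
  induction n with
  | zero => exact ⟨rfl, rfl⟩
  | succ n ih =>
    rw [(CHSec_succ_of_ne v1 v2 f (by omega)).1, (CHSec_succ_of_ne v1 v2 f (by omega)).2]
    exact ih (by omega)

lemma iInter_CHSec (k : ℕ) :
    ⋂ n, CHSec1 v1 v2 f n k = CHSec1 v1 v2 f k k ∧
      ⋂ n, CHSec2 v1 v2 f n k = CHSec2 v1 v2 f k k := by
  constructor <;> refine iInter_eq_of_forall_subset fun n => ?_ <;> rcases le_or_gt k n with h | h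
  · exact (CHSec_of_le v1 v2 f h).1.superset
  · exact (CHSec_of_lt v1 v2 f h).1 ▸ Set.subset_univ _
  · exact (CHSec_of_le v1 v2 f h).2.superset
  · exact (CHSec_of_lt v1 v2 f h).2 ▸ Set.subset_univ _

variable {v1 v2 f}

lemma probOn_SigmaProc_eq_one_of_CHBelief [Nonempty A] [Nonempty B] {m : ℕ} {μ : Belief B}
    (hμ : CHBelief (fun t => SigmaSec2 v1 v2 f t t) m μ) :
    μ.probOn (SigmaProc v1 v2 f m).2 = 1 := by
  rw [Belief.probOn_eq_one_iff]
  rintro ⟨t, b⟩ hx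
  by_contra hp
  obtain ⟨ht, hb : b ∈ SigmaSec2 v1 v2 f t t⟩ := (hμ.1 (t, b)).1 hp
  rw [← (SigmaSec_stable v1 v2 f t m ht).2] at hb
  exact hx hb

lemma CHBelief_of_memDelta [Nonempty A] [Nonempty B] (hf : ∀ n, 0 < f n) {m : ℕ}
    (hgen : ∀ t, 1 ≤ t → t ≤ m → ∃ b, SigmaSec2 v1 v2 f t t = {b}) {μ : Belief B}
    (hμ : memDelta f (m + 1) μ) (hsupp : μ.probOn (SigmaProc v1 v2 f m).2 = 1) :
    CHBelief (fun t => SigmaSec2 v1 v2 f t t) m μ := by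
  have hstable t (ht : t ≤ m) : SigmaSec2 v1 v2 f m t = SigmaSec2 v1 v2 f t t :=
    (SigmaSec_stable v1 v2 f t m ht).2
  have hconst : ∀ t ≤ m, ∃ c, 0 < c ∧ ∀ b ∈ SigmaSec2 v1 v2 f t t, μ.p (t, b) = c := by
    intro t ht
    rcases Nat.eq_zero_or_pos t with rfl | htpos
    · have hcard : (0 : ℝ) < Fintype.card B := by exact_mod_cast Fintype.card_pos
      exact ⟨_, div_pos (hμ.marg_pos hf m.succ_pos) hcard,
        fun b _ => hμ.p_zero_eq hf m.succ_ne_zero b⟩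
    · obtain ⟨b₀, hb₀⟩ := hgen t htpos ht
      have hzero : ∀ b, b ≠ b₀ → μ.p (t, b) = 0 := fun b hb => by
        by_contra hp
        have hb' := (le_and_mem_SigmaSec2_of_p_ne_zero hstable hμ hsupp hp).2
        rw [hb₀, Set.mem_singleton_iff] at hb'
        exact hb hb'
      refine ⟨μ.p (t, b₀), ?_, fun b hb => ?_⟩
      · rw [← μ.marg_eq_p_of_forall_ne hzero]
        exact hμ.marg_pos hf (by omega)
      · rw [hb₀, Set.mem_singleton_iff] at hb
        rw [hb]
  refine ⟨fun ⟨t, b⟩ => ⟨le_and_mem_SigmaSec2_of_p_ne_zero hstable hμ hsupp, ?_⟩,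
    fun t ht b b' hb hb' => ?_⟩
  · rintro ⟨ht, hb⟩
    obtain ⟨c, hc, hp⟩ := hconst t ht
    rw [hp b hb]
    exact hc.ne'
  · obtain ⟨c, -, hp⟩ := hconst t ht
    rw [hp b hb, hp b' hb']

lemma CHSec1_succ_self_eq [Nonempty A] [Nonempty B] (hf : ∀ n, 0 < f n) {m : ℕ}
    (hCH : ∀ t ≤ m, CHSec2 v1 v2 f t t = SigmaSec2 v1 v2 f t t)
    (hgen : ∀ t, 1 ≤ t → t ≤ m → ∃ b, SigmaSec2 v1 v2 f t t = {b}) :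
    CHSec1 v1 v2 f (m + 1) (m + 1) = SigmaSec1 v1 v2 f (m + 1) (m + 1) := by
  have hsec t (ht : t ≤ m) : CHSec2 v1 v2 f m t = SigmaSec2 v1 v2 f t t :=
    (CHSec_of_le v1 v2 f ht).2.trans (hCH t ht)
  rw [CHSec1_succ_self]
  ext a
  constructor
  · rintro ⟨μ, hμ, hCHμ, hbr⟩
    exact mem_SigmaProc_succ_of_isBR hμ hbr
      (probOn_SigmaProc_eq_one_of_CHBelief (hCHμ.congr hsec))
  · rintro ⟨-, μ, hμ, hsupp, hbr⟩
    refine ⟨μ, hμ, ?_, hbr⟩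
    exact (CHBelief_of_memDelta hf hgen hμ hsupp).congr fun t ht => (hsec t ht).symm

lemma CHSec_self_eq_SigmaSec_self [Nonempty A] [Nonempty B] (hf : ∀ n, 0 < f n)
    (hgen : ∀ k : ℕ, 1 ≤ k →
      (∃ a : A, SigmaSec1 v1 v2 f k k = {a}) ∧ (∃ b : B, SigmaSec2 v1 v2 f k k = {b}))
    (k : ℕ) :
    CHSec1 v1 v2 f k k = SigmaSec1 v1 v2 f k k ∧ CHSec2 v1 v2 f k k = SigmaSec2 v1 v2 f k k := by
  induction k using Nat.strong_induction_on with
  | _ k ih =>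
    rcases k with _ | m
    · exact ⟨rfl, rfl⟩
    refine ⟨CHSec1_succ_self_eq hf (fun t ht => (ih t (by omega)).2)
      (fun t ht _ => (hgen t ht).2), ?_⟩
    rw [← CHSec1_swap, ← SigmaSec1_swap]
    refine CHSec1_succ_self_eq hf (fun t ht => ?_) fun t ht _ => ?_
    · rw [CHSec2_swap, SigmaSec2_swap]
      exact (ih t (by omega)).1
    · rw [SigmaSec2_swap]
      exact (hgen t ht).1

end CHProc

theorem ch_eq_sigma_of_generic_general {A B : Type*} [Fintype A] [Fintype B] [Nonempty A] [Nonempty B]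
    (v1 : A → B → ℝ) (v2 : B → A → ℝ)
    (f : ℕ → ℝ) (hf : ∀ n, 0 < f n)
    (hgen : ∀ k : ℕ, 1 ≤ k →
      (∃ a : A, SigmaSec1 v1 v2 f k k = {a}) ∧ (∃ b : B, SigmaSec2 v1 v2 f k k = {b})) :
    (∀ k : ℕ, CHSec1 v1 v2 f k k = SigmaSec1 v1 v2 f k k) ∧
    (∀ k : ℕ, CHSec2 v1 v2 f k k = SigmaSec2 v1 v2 f k k) ∧
    (∀ k : ℕ, (⋂ n : ℕ, CHSec1 v1 v2 f n k) = ⋂ n : ℕ, SigmaSec1 v1 v2 f n k) ∧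
    (∀ k : ℕ, (⋂ n : ℕ, CHSec2 v1 v2 f n k) = ⋂ n : ℕ, SigmaSec2 v1 v2 f n k) := by
  have hdiag := CHSec_self_eq_SigmaSec_self hf hgen
  refine ⟨fun k => (hdiag k).1, fun k => (hdiag k).2, fun k => ?_, fun k => ?_⟩
  · rw [(iInter_CHSec v1 v2 f k).1, (iInter_SigmaSec v1 v2 f k).1, (hdiag k).1]
  · rw [(iInter_CHSec v1 v2 f k).2, (iInter_SigmaSec v1 v2 f k).2, (hdiag k).2]

/-- Theorem 1, part 2: if for every player i and every k ≥ 1 the survivor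
set `Σᵏ_{θ_{ik}}` is a singleton, then `Ψᵏ_{θ_{ik}} = Σᵏ_{θ_{ik}}` for every i, k, and
consequently the CH solution coincides with Δ^κ-rationalizability. -/
theorem ch_eq_sigma_of_generic {A B : Type*} [Fintype A] [Fintype B] [Nonempty A] [Nonempty B]
    (v1 : A → B → ℝ) (v2 : B → A → ℝ)
    (f : ℕ → ℝ) (hf : ∀ n, 0 < f n) (hfsum : HasSum f 1)
    (hgen : ∀ k : ℕ, 1 ≤ k →
      (∃ a : A, SigmaSec1 v1 v2 f k k = {a}) ∧ (∃ b : B, SigmaSec2 v1 v2 f k k = {b})) :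
    (∀ k : ℕ, CHSec1 v1 v2 f k k = SigmaSec1 v1 v2 f k k) ∧
    (∀ k : ℕ, CHSec2 v1 v2 f k k = SigmaSec2 v1 v2 f k k) ∧
    (∀ k : ℕ, (⋂ n : ℕ, CHSec1 v1 v2 f n k) = ⋂ n : ℕ, SigmaSec1 v1 v2 f n k) ∧
    (∀ k : ℕ, (⋂ n : ℕ, CHSec2 v1 v2 f n k) = ⋂ n : ℕ, SigmaSec2 v1 v2 f n k) :=
  ch_eq_sigma_of_generic_general v1 v2 f hf hgen
end

section
/- (Fixed-point/Bayesian-equilibrium property of the CH solution, Proposition 2) For each player i and each k ≥ 1, let C_t = proj_{A_{-i}} Ψ^∞_{θ_{-i,t}} denote the CH-solution actions of the opponent's level-t type (so C₀ = A_{-i}). Then proj_{A_i} Ψ^∞_{θ_{ik}} equals the set of maximizers over a_i ∈ A_i of ∑_{t=0}^{k−1} f^k(t) · (1/|C_t|) · ∑_{a_{-i} ∈ C_t} v_i(a_i, a_{-i}). Consequently, in the decision-rule profile assigning to each level-t type of each player the uniform mixture over its CH-solution actions, every type's mixture is supported on best responses to the opponent's profile under the posterior f^k over opponent levels 0,…,k−1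 (the mixed-action Bayesian-equilibrium condition). -/
open scoped BigOperators
open Classical

noncomputable section CHAux

variable {A B : Type*} [Fintype A] [Fintype B]

/-- The finset of actions in `Ψ t`. -/
def Fset (Ψ : ℕ → Set B) (t : ℕ) : Finset B :=
  Finset.univ.filter (fun b => b ∈ Ψ t)

lemma mem_Fset {Ψ : ℕ → Set B} {t : ℕ} {b : B} : b ∈ Fset Ψ t ↔ b ∈ Ψ t := by
  simp [Fset]

lemma ncard_eq_Fset (Ψ : ℕ → Set B) (t : ℕ) : (Ψ t).ncard = (Fset Ψ t).card := by
  classical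
  rw [Set.ncard_eq_toFinset_card']
  congr 1; ext b; simp [Fset]

lemma fnorm_pos {f : ℕ → ℝ} (hf : ∀ n, 0 < f n) {k : ℕ} (hk : k ≠ 0) (t : ℕ) :
    0 < fnorm f k t :=
  div_pos (hf t) (Finset.sum_pos (fun i _ => hf i) (Finset.nonempty_range_iff.mpr hk))

lemma sum_fnorm {f : ℕ → ℝ} (hf : ∀ n, 0 < f n) {k : ℕ} (hk : k ≠ 0) :
    ∑ t ∈ Finset.range k, fnorm f k t = 1 := by
  have hS : 0 < ∑ ℓ ∈ Finset.range k, f ℓ :=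
    Finset.sum_pos (fun i _ => hf i) (Finset.nonempty_range_iff.mpr hk)
  simp only [fnorm]
  rw [← Finset.sum_div, div_self hS.ne']

/-- The canonical level-`k` belief density over a profile of opponent sets `Ψ`. -/
def canonP (f : ℕ → ℝ) (Ψ : ℕ → Set B) (k : ℕ) : ℕ × B → ℝ :=
  fun x => if x.1 < k ∧ x.2 ∈ Ψ x.1 then fnorm f k x.1 / ((Fset Ψ x.1).card : ℝ) else 0

lemma canonP_nonneg {f : ℕ → ℝ} (hf : ∀ n, 0 < f n) (Ψ : ℕ → Set B) (k : ℕ) (x : ℕ × B) :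
    0 ≤ canonP f Ψ k x := by
  rw [canonP]
  split
  · next h =>
      have hk : k ≠ 0 := by omega
      exact div_nonneg (fnorm_pos hf hk x.1).le (by positivity)
  · exact le_refl 0

lemma canonP_inner {f : ℕ → ℝ} {Ψ : ℕ → Set B} {k t : ℕ} (ht : t < k)
    (hne : (Fset Ψ t).Nonempty) :
    ∑ b : B, canonP f Ψ k (t, b) = fnorm f k t := by
  have hcard : ((Fset Ψ t).card : ℝ) ≠ 0 := by exact_mod_cast hne.card_pos.ne'
  have h : ∑ b : B, canonP f Ψ k (t, b)
      = ∑ b ∈ Fset Ψ t, fnorm f k t / ((Fset Ψ t).card : ℝ) := by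
    rw [Fset, Finset.sum_filter]
    refine Finset.sum_congr rfl fun b _ => ?_
    by_cases hb : b ∈ Ψ t <;> simp [canonP, ht, hb, Fset]
  rw [h, Finset.sum_const, nsmul_eq_mul]
  field_simp

lemma canonP_inner_zero {f : ℕ → ℝ} {Ψ : ℕ → Set B} {k t : ℕ} (ht : ¬ t < k) :
    ∑ b : B, canonP f Ψ k (t, b) = 0 :=
  Finset.sum_eq_zero fun b _ => by simp [canonP, ht]

lemma canonP_hasSum {f : ℕ → ℝ} (hf : ∀ n, 0 < f n) {Ψ : ℕ → Set B} {k : ℕ} (hk : k ≠ 0)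
    (hne : ∀ t, t < k → (Fset Ψ t).Nonempty) :
    HasSum (canonP f Ψ k) 1 := by
  have h0 : ∀ x ∉ (Finset.range k ×ˢ (Finset.univ : Finset B)), canonP f Ψ k x = 0 := by
    intro x hx
    simp only [Finset.mem_product, Finset.mem_range, Finset.mem_univ, and_true] at hx
    simp [canonP, hx]
  have hsum : ∑ x ∈ (Finset.range k ×ˢ (Finset.univ : Finset B)), canonP f Ψ k x = 1 := by
    rw [Finset.sum_product]
    have : ∀ t ∈ Finset.range k, ∑ b : B, canonP f Ψ k (t, b) = fnorm f k t := by
      intro t ht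
      exact canonP_inner (Finset.mem_range.mp ht) (hne t (Finset.mem_range.mp ht))
    rw [Finset.sum_congr rfl this, sum_fnorm hf hk]
  rw [← hsum]
  exact hasSum_sum_of_ne_finset_zero h0

/-- The canonical level-`k` belief. -/
def canonBelief (f : ℕ → ℝ) (hf : ∀ n, 0 < f n) (Ψ : ℕ → Set B) (k : ℕ) (hk : k ≠ 0)
    (hne : ∀ t, t < k → (Fset Ψ t).Nonempty) : Belief B :=
  ⟨canonP f Ψ k, canonP_nonneg hf Ψ k, canonP_hasSum hf hk hne⟩

lemma canonBelief_marg (f : ℕ → ℝ) (hf : ∀ n, 0 < f n) (Ψ : ℕ → Set B) (k : ℕ) (hk : k ≠ 0)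
    (hne : ∀ t, t < k → (Fset Ψ t).Nonempty) (t : ℕ) :
    (canonBelief f hf Ψ k hk hne).marg t = if t < k then fnorm f k t else 0 := by
  by_cases ht : t < k
  · simp only [ht, if_true]
    exact canonP_inner ht (hne t ht)
  · simp only [ht, if_false]
    exact canonP_inner_zero ht

lemma canonBelief_memDelta (f : ℕ → ℝ) (hf : ∀ n, 0 < f n) (Ψ : ℕ → Set B) (k : ℕ) (hk : k ≠ 0)
    (hne : ∀ t, t < k → (Fset Ψ t).Nonempty) (hΨ0 : Ψ 0 = Set.univ) :
    memDelta f k (canonBelief f hf Ψ k hk hne) := by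
  intro _
  refine ⟨fun t ht => ?_, fun _ b => ?_, fun t ht => ?_⟩
  · rw [canonBelief_marg f hf Ψ k hk hne t, if_neg (by omega)]
  · have hk0 : 0 < k := Nat.pos_of_ne_zero hk
    have hF0 : Fset Ψ 0 = Finset.univ := by
      ext b; simp [Fset, hΨ0]
    have hmarg : (canonBelief f hf Ψ k hk hne).marg 0 = fnorm f k 0 := by
      rw [canonBelief_marg f hf Ψ k hk hne 0, if_pos hk0]
    rw [hmarg]
    have hp : (canonBelief f hf Ψ k hk hne).p (0, b)
        = fnorm f k 0 / (Fintype.card B : ℝ) := by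
      show canonP f Ψ k (0, b) = _
      rw [canonP]
      rw [if_pos ⟨hk0, by rw [hΨ0]; trivial⟩]
      rw [hF0, Finset.card_univ]
    rw [hp]
    have hfn : fnorm f k 0 ≠ 0 := (fnorm_pos hf hk 0).ne'
    rw [div_div, mul_comm, ← div_div, div_self hfn]
  · rw [canonBelief_marg f hf Ψ k hk hne t, if_pos ht]

lemma canonBelief_CHBelief (f : ℕ → ℝ) (hf : ∀ n, 0 < f n) (Ψ : ℕ → Set B) (n : ℕ)
    (hne : ∀ t, t < n + 1 → (Fset Ψ t).Nonempty) :
    CHBelief Ψ n (canonBelief f hf Ψ (n + 1) (Nat.succ_ne_zero n) hne) := by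
  constructor
  · intro x
    show canonP f Ψ (n + 1) x ≠ 0 ↔ _
    rw [canonP]
    constructor
    · intro h
      by_cases hc : x.1 < n + 1 ∧ x.2 ∈ Ψ x.1
      · exact ⟨by omega, hc.2⟩
      · exact absurd (if_neg hc) h
    · intro ⟨h1, h2⟩
      have hc : x.1 < n + 1 ∧ x.2 ∈ Ψ x.1 := ⟨by omega, h2⟩
      rw [if_pos hc]
      have hcard : (0 : ℝ) < ((Fset Ψ x.1).card : ℝ) := by
        exact_mod_cast (hne x.1 hc.1).card_pos
      exact (div_pos (fnorm_pos hf (Nat.succ_ne_zero n) x.1) hcard).ne'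
  · intro t ht b b' hb hb'
    show canonP f Ψ (n + 1) (t, b) = canonP f Ψ (n + 1) (t, b')
    have htk : t < n + 1 := by omega
    simp [canonP, htk, hb, hb']

/-- Any belief satisfying `memDelta` at level `n+1` and the CH-belief condition
w.r.t. `Ψ` at step `n` has the canonical density. -/
lemma belief_eq_canonP {f : ℕ → ℝ} (hf : ∀ n, 0 < f n) {Ψ : ℕ → Set B} {n : ℕ} {μ : Belief B}
    (hmem : memDelta f (n + 1) μ) (hch : CHBelief Ψ n μ) :
    μ.p = canonP f Ψ (n + 1) := by
  obtain ⟨h1, h2, h3⟩ := hmem (Nat.succ_ne_zero n)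
  funext x
  obtain ⟨t, b⟩ := x
  by_cases ht : t < n + 1
  · by_cases hb : b ∈ Ψ t
    · have hzero : ∀ b', b' ∉ Ψ t → μ.p (t, b') = 0 := by
        intro b' hb'
        by_contra h
        exact hb' ((hch.1 (t, b')).mp h).2
      have huni : ∀ b' ∈ Fset Ψ t, μ.p (t, b') = μ.p (t, b) :=
        fun b' hb' => hch.2 t (by omega) b' b (mem_Fset.mp hb') hb
      have hmarg : μ.marg t = ((Fset Ψ t).card : ℝ) * μ.p (t, b) := by
        rw [Belief.marg, ← Finset.sum_filter_add_sum_filter_not Finset.univ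
          (fun b' => b' ∈ Ψ t) (fun b' => μ.p (t, b'))]
        have e1 : ∑ b' ∈ Finset.univ.filter (fun b' => b' ∈ Ψ t), μ.p (t, b')
            = ((Fset Ψ t).card : ℝ) * μ.p (t, b) := by
          rw [show Finset.univ.filter (fun b' => b' ∈ Ψ t) = Fset Ψ t from rfl]
          rw [Finset.sum_congr rfl huni, Finset.sum_const, nsmul_eq_mul]
        have e2 : ∑ b' ∈ Finset.univ.filter (fun b' => ¬ b' ∈ Ψ t), μ.p (t, b') = 0 :=
          Finset.sum_eq_zero fun b' hb' => hzero b' (Finset.mem_filter.mp hb').2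
        rw [e1, e2, add_zero]
      have hft := h3 t ht
      rw [hft] at hmarg
      have hpos : 0 < fnorm f (n + 1) t := fnorm_pos hf (Nat.succ_ne_zero n) t
      have hcard : ((Fset Ψ t).card : ℝ) ≠ 0 := by
        intro h0
        rw [h0, zero_mul] at hmarg
        exact hpos.ne' hmarg
      have hp : μ.p (t, b) = fnorm f (n + 1) t / ((Fset Ψ t).card : ℝ) := by
        field_simp
        linarith [hmarg]
      rw [hp]
      simp [canonP, ht, hb]
    · have h0 : μ.p (t, b) = 0 := by
        by_contra h
        exact hb ((hch.1 (t, b)).mp h).2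
      simp [canonP, hb, h0]
  · have h0 : μ.p (t, b) = 0 := by
      by_contra h
      have := ((hch.1 (t, b)).mp h).1
      omega
    simp [canonP, ht, h0]

/-- The mixed payoff against the uniform mixtures over `Ψ t`, `t ≤ n`,
with posterior `f^{n+1}`. -/
def mixPay (v : A → B → ℝ) (f : ℕ → ℝ) (Ψ : ℕ → Set B) (n : ℕ) (a : A) : ℝ :=
  ∑ t ∈ Finset.range (n + 1),
    fnorm f (n + 1) t * (1 / ((Fset Ψ t).card : ℝ)) * ∑ b ∈ Fset Ψ t, v a b

lemma expPay_eq_mixPay (v : A → B → ℝ) {f : ℕ → ℝ} {Ψ : ℕ → Set B} {n : ℕ} {μ : Belief B}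
    (hμ : μ.p = canonP f Ψ (n + 1)) (a : A) :
    expPay v (n + 1) μ a = mixPay v f Ψ n a := by
  rw [expPay]
  have h0 : ∀ x ∉ (Finset.range (n + 1) ×ˢ (Finset.univ : Finset B)),
      μ.p x * (if n + 1 = 0 then 0 else v a x.2) = 0 := by
    intro x hx
    simp only [Finset.mem_product, Finset.mem_range, Finset.mem_univ, and_true] at hx
    rw [hμ]
    simp [canonP, hx]
  rw [tsum_eq_sum h0, Finset.sum_product, mixPay]
  refine Finset.sum_congr rfl fun t ht => ?_
  have ht' : t < n + 1 := Finset.mem_range.mp ht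
  have hinner : ∀ b : B, μ.p (t, b) * (if n + 1 = 0 then 0 else v a b)
      = if b ∈ Ψ t then fnorm f (n + 1) t / ((Fset Ψ t).card : ℝ) * v a b else 0 := by
    intro b
    rw [hμ, if_neg (Nat.succ_ne_zero n)]
    by_cases hb : b ∈ Ψ t <;> simp [canonP, ht', hb]
  calc ∑ b : B, μ.p (t, b) * (if n + 1 = 0 then 0 else v a b)
      = ∑ b : B, if b ∈ Ψ t then fnorm f (n + 1) t / ((Fset Ψ t).card : ℝ) * v a b else 0 :=
        Finset.sum_congr rfl fun b _ => hinner b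
    _ = ∑ b ∈ Fset Ψ t, fnorm f (n + 1) t / ((Fset Ψ t).card : ℝ) * v a b := by
        rw [Fset, Finset.sum_filter]
    _ = fnorm f (n + 1) t * (1 / ((Fset Ψ t).card : ℝ)) * ∑ b ∈ Fset Ψ t, v a b := by
        rw [Finset.mul_sum]
        refine Finset.sum_congr rfl fun b _ => ?_
        ring

/-- Key characterization: at level `n+1`, the CH-step set is exactly the set of
maximizers of the mixed payoff. -/
lemma CH_step_eq_maximizers (v : A → B → ℝ) {f : ℕ → ℝ} (hf : ∀ n, 0 < f n)
    (Ψ : ℕ → Set B) (n : ℕ)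
    (hne : ∀ t, t < n + 1 → (Fset Ψ t).Nonempty) (hΨ0 : Ψ 0 = Set.univ) :
    {a : A | ∃ μ : Belief B, memDelta f (n + 1) μ ∧ CHBelief Ψ n μ ∧ isBR v (n + 1) μ a} =
    {a : A | ∀ a' : A, mixPay v f Ψ n a' ≤ mixPay v f Ψ n a} := by
  ext a
  simp only [Set.mem_setOf_eq]
  constructor
  · rintro ⟨μ, hmem, hch, hbr⟩ a'
    have hp := belief_eq_canonP hf hmem hch
    rw [← expPay_eq_mixPay v hp a, ← expPay_eq_mixPay v hp a']
    exact hbr a'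
  · intro hmax
    refine ⟨canonBelief f hf Ψ (n + 1) (Nat.succ_ne_zero n) hne,
      canonBelief_memDelta f hf Ψ (n + 1) (Nat.succ_ne_zero n) hne hΨ0,
      canonBelief_CHBelief f hf Ψ n hne, fun a' => ?_⟩
    have hp : (canonBelief f hf Ψ (n + 1) (Nat.succ_ne_zero n) hne).p
        = canonP f Ψ (n + 1) := rfl
    rw [expPay_eq_mixPay v hp a, expPay_eq_mixPay v hp a']
    exact hmax a'

end CHAux

noncomputable section CHProcLemmas

variable {A B : Type*} [Fintype A] [Fintype B]
variable (v1 : A → B → ℝ) (v2 : B → A → ℝ) (f : ℕ → ℝ)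

lemma CHProc_succ_ne_fst {n k : ℕ} (h : k ≠ n + 1) :
    (CHProc v1 v2 f (n + 1)).1 k = (CHProc v1 v2 f n).1 k := by
  simp only [CHProc]
  rw [if_neg h]

lemma CHProc_succ_ne_snd {n k : ℕ} (h : k ≠ n + 1) :
    (CHProc v1 v2 f (n + 1)).2 k = (CHProc v1 v2 f n).2 k := by
  simp only [CHProc]
  rw [if_neg h]

lemma CHProc_zero (n : ℕ) :
    (CHProc v1 v2 f n).1 0 = Set.univ ∧ (CHProc v1 v2 f n).2 0 = Set.univ := by
  induction n with
  | zero => exact ⟨rfl, rfl⟩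
  | succ n ih =>
    have h0 : (0 : ℕ) ≠ n + 1 := (Nat.succ_ne_zero n).symm
    rw [CHProc_succ_ne_fst v1 v2 f h0, CHProc_succ_ne_snd v1 v2 f h0]
    exact ih

lemma CHProc_lt {n k : ℕ} (h : n < k) :
    (CHProc v1 v2 f n).1 k = Set.univ ∧ (CHProc v1 v2 f n).2 k = Set.univ := by
  induction n with
  | zero => exact ⟨rfl, rfl⟩
  | succ n ih =>
    have hne : k ≠ n + 1 := by omega
    rw [CHProc_succ_ne_fst v1 v2 f hne, CHProc_succ_ne_snd v1 v2 f hne]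
    exact ih (by omega)

lemma CHProc_stable {n k : ℕ} (h : k ≤ n) :
    (CHProc v1 v2 f n).1 k = (CHProc v1 v2 f k).1 k ∧
    (CHProc v1 v2 f n).2 k = (CHProc v1 v2 f k).2 k := by
  induction n with
  | zero =>
    have : k = 0 := Nat.le_zero.mp h
    subst this; exact ⟨rfl, rfl⟩
  | succ n ih =>
    by_cases hk : k = n + 1
    · subst hk; exact ⟨rfl, rfl⟩
    · rw [CHProc_succ_ne_fst v1 v2 f hk, CHProc_succ_ne_snd v1 v2 f hk]
      exact ih (by omega)

lemma iInter_CHSec1 {k m : ℕ} (h : k ≤ m) :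
    (⋂ n, CHSec1 v1 v2 f n k) = CHSec1 v1 v2 f m k := by
  apply Set.eq_of_subset_of_subset
  · exact Set.iInter_subset _ m
  · refine Set.subset_iInter fun n => ?_
    rcases lt_or_ge n k with hn | hn
    · have e : CHSec1 v1 v2 f n k = Set.univ := (CHProc_lt v1 v2 f hn).1
      rw [e]; exact Set.subset_univ _
    · have e1 : CHSec1 v1 v2 f n k = CHSec1 v1 v2 f k k := (CHProc_stable v1 v2 f hn).1
      have e2 : CHSec1 v1 v2 f m k = CHSec1 v1 v2 f k k := (CHProc_stable v1 v2 f h).1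
      rw [e1, ← e2]

lemma iInter_CHSec2 {k m : ℕ} (h : k ≤ m) :
    (⋂ n, CHSec2 v1 v2 f n k) = CHSec2 v1 v2 f m k := by
  apply Set.eq_of_subset_of_subset
  · exact Set.iInter_subset _ m
  · refine Set.subset_iInter fun n => ?_
    rcases lt_or_ge n k with hn | hn
    · have e : CHSec2 v1 v2 f n k = Set.univ := (CHProc_lt v1 v2 f hn).2
      rw [e]; exact Set.subset_univ _
    · have e1 : CHSec2 v1 v2 f n k = CHSec2 v1 v2 f k k := (CHProc_stable v1 v2 f hn).2
      have e2 : CHSec2 v1 v2 f m k = CHSec2 v1 v2 f k k := (CHProc_stable v1 v2 f h).2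
      rw [e1, ← e2]

lemma CHProc_succ_fst (n : ℕ) :
    (CHProc v1 v2 f (n + 1)).1 (n + 1) =
      {a : A | ∃ μ : Belief B, memDelta f (n + 1) μ ∧
        CHBelief ((CHProc v1 v2 f n).2) n μ ∧ isBR v1 (n + 1) μ a} := by
  simp only [CHProc, if_true]

lemma CHProc_succ_snd (n : ℕ) :
    (CHProc v1 v2 f (n + 1)).2 (n + 1) =
      {b : B | ∃ μ : Belief A, memDelta f (n + 1) μ ∧
        CHBelief ((CHProc v1 v2 f n).1) n μ ∧ isBR v2 (n + 1) μ b} := by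
  simp only [CHProc, if_true]

lemma CHProc_nonempty [Nonempty A] [Nonempty B] (hf : ∀ n, 0 < f n) (n : ℕ) :
    ∀ t, ((CHProc v1 v2 f n).1 t).Nonempty ∧ ((CHProc v1 v2 f n).2 t).Nonempty := by
  induction n with
  | zero => intro t; exact ⟨Set.univ_nonempty, Set.univ_nonempty⟩
  | succ n ih =>
    intro t
    by_cases ht : t = n + 1
    · subst ht
      constructor
      · rw [CHProc_succ_fst]
        set Ψ := (CHProc v1 v2 f n).2 with hΨ
        have hne : ∀ t, t < n + 1 → (Fset Ψ t).Nonempty := by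
          intro t _
          obtain ⟨b, hb⟩ := (ih t).2
          exact ⟨b, mem_Fset.mpr hb⟩
        have hΨ0 : Ψ 0 = Set.univ := (CHProc_zero v1 v2 f n).2
        rw [CH_step_eq_maximizers v1 hf Ψ n hne hΨ0]
        obtain ⟨a, _, hmax⟩ := Finset.exists_max_image Finset.univ
          (mixPay v1 f Ψ n) Finset.univ_nonempty
        exact ⟨a, fun a' => hmax a' (Finset.mem_univ a')⟩
      · rw [CHProc_succ_snd]
        set Ψ := (CHProc v1 v2 f n).1 with hΨ
        have hne : ∀ t, t < n + 1 → (Fset Ψ t).Nonempty := by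
          intro t _
          obtain ⟨a, ha⟩ := (ih t).1
          exact ⟨a, mem_Fset.mpr ha⟩
        have hΨ0 : Ψ 0 = Set.univ := (CHProc_zero v1 v2 f n).1
        rw [CH_step_eq_maximizers v2 hf Ψ n hne hΨ0]
        obtain ⟨b, _, hmax⟩ := Finset.exists_max_image Finset.univ
          (mixPay v2 f Ψ n) Finset.univ_nonempty
        exact ⟨b, fun b' => hmax b' (Finset.mem_univ b')⟩
    · rw [CHProc_succ_ne_fst v1 v2 f ht, CHProc_succ_ne_snd v1 v2 f ht]
      exact ih t

end CHProcLemmas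


/-- Player 1's expected payoff from action `a` against the opponent's CH-solution sets
`C_t = proj Ψ^∞_{θ_{2t}}`, each played uniformly, under the posterior `f^k` over levels
`0, …, k−1`. -/
noncomputable def chMixPay1 {A B : Type*} [Fintype A] [Fintype B]
    (v1 : A → B → ℝ) (v2 : B → A → ℝ) (f : ℕ → ℝ) (k : ℕ) (a : A) : ℝ :=
  ∑ t ∈ Finset.range k,
    fnorm f k t * (1 / (((⋂ n : ℕ, CHSec2 v1 v2 f n t) : Set B).ncard : ℝ)) *
      ∑ b ∈ Finset.univ.filter (fun b : B => b ∈ ⋂ n : ℕ, CHSec2 v1 v2 f n t), v1 a b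

/-- Player 2's expected payoff from action `b` against player 1's CH-solution sets,
each played uniformly, under the posterior `f^k`. -/
noncomputable def chMixPay2 {A B : Type*} [Fintype A] [Fintype B]
    (v1 : A → B → ℝ) (v2 : B → A → ℝ) (f : ℕ → ℝ) (k : ℕ) (b : B) : ℝ :=
  ∑ t ∈ Finset.range k,
    fnorm f k t * (1 / (((⋂ n : ℕ, CHSec1 v1 v2 f n t) : Set A).ncard : ℝ)) *
      ∑ a ∈ Finset.univ.filter (fun a : A => a ∈ ⋂ n : ℕ, CHSec1 v1 v2 f n t), v2 b a

/-- Proposition 2, fixed-point property of the CH solution: with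
`C_t = proj Ψ^∞_{θ_{-i,t}}` (and `C₀` the full action set), for each player i and each
k ≥ 1, `proj Ψ^∞_{θ_{ik}}` is exactly the set of maximizers of
`∑_{t<k} f^k(t)·(1/|C_t|)·∑_{a_{-i}∈C_t} v_i(·, a_{-i})`; hence the uniform mixtures over
the CH-solution sets are supported on best responses (the mixed Bayesian-equilibrium
condition). -/
theorem ch_solution_fixed_point {A B : Type*} [Fintype A] [Fintype B] [Nonempty A] [Nonempty B]
    (v1 : A → B → ℝ) (v2 : B → A → ℝ)
    (f : ℕ → ℝ) (hf : ∀ n, 0 < f n) (hfsum : HasSum f 1)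
    (k : ℕ) (hk : 1 ≤ k) :
    (⋂ n : ℕ, CHSec1 v1 v2 f n 0) = Set.univ ∧
    (⋂ n : ℕ, CHSec2 v1 v2 f n 0) = Set.univ ∧
    (⋂ n : ℕ, CHSec1 v1 v2 f n k) =
      {a : A | ∀ a' : A, chMixPay1 v1 v2 f k a' ≤ chMixPay1 v1 v2 f k a} ∧
    (⋂ n : ℕ, CHSec2 v1 v2 f n k) =
      {b : B | ∀ b' : B, chMixPay2 v1 v2 f k b' ≤ chMixPay2 v1 v2 f k b} := by
  obtain ⟨m, rfl⟩ : ∃ m, k = m + 1 := ⟨k - 1, by omega⟩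
  have hzero1 : (⋂ n : ℕ, CHSec1 v1 v2 f n 0) = Set.univ := by
    rw [Set.iInter_eq_univ]
    exact fun n => (CHProc_zero v1 v2 f n).1
  have hzero2 : (⋂ n : ℕ, CHSec2 v1 v2 f n 0) = Set.univ := by
    rw [Set.iInter_eq_univ]
    exact fun n => (CHProc_zero v1 v2 f n).2
  refine ⟨hzero1, hzero2, ?_, ?_⟩
  · set Ψ := (CHProc v1 v2 f m).2 with hΨ
    have hi : (⋂ n, CHSec1 v1 v2 f n (m + 1)) = CHSec1 v1 v2 f (m + 1) (m + 1) :=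
      iInter_CHSec1 v1 v2 f le_rfl
    have hsec : CHSec1 v1 v2 f (m + 1) (m + 1) =
        {a : A | ∃ μ : Belief B, memDelta f (m + 1) μ ∧ CHBelief Ψ m μ ∧ isBR v1 (m + 1) μ a} :=
      CHProc_succ_fst v1 v2 f m
    have hne : ∀ t, t < m + 1 → (Fset Ψ t).Nonempty := by
      intro t _
      obtain ⟨b, hb⟩ := (CHProc_nonempty v1 v2 f hf m t).2
      exact ⟨b, mem_Fset.mpr hb⟩
    have hΨ0 : Ψ 0 = Set.univ := (CHProc_zero v1 v2 f m).2
    have hmix : ∀ a : A, chMixPay1 v1 v2 f (m + 1) a = mixPay v1 f Ψ m a := by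
      intro a
      rw [chMixPay1, mixPay]
      refine Finset.sum_congr rfl fun t ht => ?_
      have ht' : t ≤ m := by
        have := Finset.mem_range.mp ht; omega
      have e : (⋂ n, CHSec2 v1 v2 f n t) = Ψ t := iInter_CHSec2 v1 v2 f ht'
      rw [e, ncard_eq_Fset]
      rfl
    rw [hi, hsec, CH_step_eq_maximizers v1 hf Ψ m hne hΨ0]
    ext a
    simp only [Set.mem_setOf_eq, hmix]
  · set Ψ := (CHProc v1 v2 f m).1 with hΨ
    have hi : (⋂ n, CHSec2 v1 v2 f n (m + 1)) = CHSec2 v1 v2 f (m + 1) (m + 1) :=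
      iInter_CHSec2 v1 v2 f le_rfl
    have hsec : CHSec2 v1 v2 f (m + 1) (m + 1) =
        {b : B | ∃ μ : Belief A, memDelta f (m + 1) μ ∧ CHBelief Ψ m μ ∧ isBR v2 (m + 1) μ b} :=
      CHProc_succ_snd v1 v2 f m
    have hne : ∀ t, t < m + 1 → (Fset Ψ t).Nonempty := by
      intro t _
      obtain ⟨a, ha⟩ := (CHProc_nonempty v1 v2 f hf m t).1
      exact ⟨a, mem_Fset.mpr ha⟩
    have hΨ0 : Ψ 0 = Set.univ := (CHProc_zero v1 v2 f m).1
    have hmix : ∀ b : B, chMixPay2 v1 v2 f (m + 1) b = mixPay v2 f Ψ m b := by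
      intro b
      rw [chMixPay2, mixPay]
      refine Finset.sum_congr rfl fun t ht => ?_
      have ht' : t ≤ m := by
        have := Finset.mem_range.mp ht; omega
      have e : (⋂ n, CHSec1 v1 v2 f n t) = Ψ t := iInter_CHSec1 v1 v2 f ht'
      rw [e, ncard_eq_Fset]
      rfl
    rw [hi, hsec, CH_step_eq_maximizers v2 hf Ψ m hne hΨ0]
    ext b
    simp only [Set.mem_setOf_eq, hmix]
end
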